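/- arXiv:1209.4114 — 3 statements merged into one kernel-verified Lean document; each statement's English description precedes it below -/
import Mathlib

section
/- Let (V, •, I; ω) be a semiunital semimonoidal category in which I is firm (ω_I : I → I•I is an isomorphism). Then: (i) if X and Y are firm objects, so is X•Y; and (ii) the full subcategory of V on the firm objects is a monoidal category with tensor product •, unit object I, associator γ, left unitor λ_X = ω_X^{-1} : I•X → X and right unitor ρ_X = ω_X^{-1}∘℘_X : X•I → X. -/
open CategoryTheory

universe v u

/-- A semiunital semimonoidal category structure on a category `V`:
a bifunctor `t` (written `•` in the paper) with associator `γ` satisfying the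
pentagon coherence, a semiunit object `I` with a natural transformation
`ω : X ⟶ I • X` and natural isomorphisms `ℓ : I • X ≅ X • I` (with inverse
`℘ = ℓ.inv`) such that `ℓ_I = ℘_I`, `ℓ` is compatible with the associator, and
`ω_{X•Y}` coincides, up to the associator isomorphisms, with both `ω_X • Y`
and `X • ω_Y`. -/
structure SSM (V : Type u) [Category.{v} V] where
  /-- the tensor (semimonoidal) product on objects -/
  t : V → V → V
  /-- the tensor product on morphisms -/
  tmap : ∀ {X X' Y Y' : V}, (X ⟶ X') → (Y ⟶ Y') → (t X Y ⟶ t X' Y')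
  tmap_id : ∀ X Y : V, tmap (𝟙 X) (𝟙 Y) = 𝟙 (t X Y)
  tmap_comp : ∀ {X X' X'' Y Y' Y'' : V} (f : X ⟶ X') (f' : X' ⟶ X'')
    (g : Y ⟶ Y') (g' : Y' ⟶ Y''),
    tmap (f ≫ f') (g ≫ g') = tmap f g ≫ tmap f' g'
  /-- the associator -/
  γ : ∀ X Y Z : V, t (t X Y) Z ≅ t X (t Y Z)
  γ_nat : ∀ {X X' Y Y' Z Z' : V} (f : X ⟶ X') (g : Y ⟶ Y') (h : Z ⟶ Z'),
    tmap (tmap f g) h ≫ (γ X' Y' Z').hom = (γ X Y Z).hom ≫ tmap f (tmap g h)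
  pentagon : ∀ W X Y Z : V,
    tmap (γ W X Y).hom (𝟙 Z) ≫ (γ W (t X Y) Z).hom ≫ tmap (𝟙 W) (γ X Y Z).hom
      = (γ (t W X) Y Z).hom ≫ (γ W X (t Y Z)).hom
  /-- the semiunit object -/
  I : V
  /-- the semiunit natural transformation `ω_X : X ⟶ I • X` -/
  ω : ∀ X : V, X ⟶ t I X
  ω_nat : ∀ {X Y : V} (f : X ⟶ Y), f ≫ ω Y = ω X ≫ tmap (𝟙 I) f
  /-- the natural isomorphism `ℓ_X : I • X ≅ X • I` (with inverse `℘_X`) -/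
  ℓ : ∀ X : V, t I X ≅ t X I
  ℓ_nat : ∀ {X Y : V} (f : X ⟶ Y), tmap (𝟙 I) f ≫ (ℓ Y).hom = (ℓ X).hom ≫ tmap f (𝟙 I)
  ℓ_I : (ℓ I).hom = (ℓ I).inv
  ℓ_assoc : ∀ X Y : V,
    (γ I X Y).hom ≫ (ℓ (t X Y)).hom ≫ (γ X Y I).hom
      = tmap (ℓ X).hom (𝟙 Y) ≫ (γ X I Y).hom ≫ tmap (𝟙 X) (ℓ Y).hom
  ω_left : ∀ X Y : V, tmap (ω X) (𝟙 Y) ≫ (γ I X Y).hom = ω (t X Y)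
  ω_right : ∀ X Y : V,
    tmap (𝟙 X) (ω Y) ≫ (γ X I Y).inv ≫ tmap (ℓ X).inv (𝟙 Y) ≫ (γ I X Y).hom = ω (t X Y)

/-!
Firmness of `X • Y` follows from `ω_{X•Y} = (ω_X • Y) ≫ γ`. Equating the two expressions for
`ω_{X•Y}` given by the axioms and cancelling `γ` yields `(X • ω_Y) ≫ γ⁻¹ ≫ (℘_X • Y) = ω_X • Y`,
which is the triangle identity once `ω` is inverted. For `λ_I = ρ_I` one shows `ℓ_I = 𝟙`:
naturality of `ω` at `ω_I` gives `ω_{I•I} = I • ω_I`, hence `℘_I • I = 𝟙`; naturality of `ℓ` and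
`ℓ_I = ℘_I` turn this into `I • ℓ_I = 𝟙`, and naturality of `ω` at `ℓ_I` then gives `ℓ_I = 𝟙`
because `ω_{I•I}` is invertible.
-/

namespace SSM

variable {V : Type u} [Category.{v} V] (S : SSM V)

instance isIso_tmap {X X' Y Y' : V} (f : X ⟶ X') (g : Y ⟶ Y') [IsIso f] [IsIso g] :
    IsIso (S.tmap f g) :=
  ⟨S.tmap (inv f) (inv g),
    by rw [← S.tmap_comp, IsIso.hom_inv_id, IsIso.hom_inv_id, S.tmap_id],
    by rw [← S.tmap_comp, IsIso.inv_hom_id, IsIso.inv_hom_id, S.tmap_id]⟩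

lemma tmap_comp_tmap {X X' X'' Y Y' Y'' : V} (f : X ⟶ X') (f' : X' ⟶ X'')
    (g : Y ⟶ Y') (g' : Y' ⟶ Y'') :
    S.tmap f g ≫ S.tmap f' g' = S.tmap (f ≫ f') (g ≫ g') :=
  (S.tmap_comp f f' g g').symm

lemma tmap_id_ω_comp_γ_inv_comp_tmap_ℓ_inv (X Y : V) :
    S.tmap (𝟙 X) (S.ω Y) ≫ (S.γ X S.I Y).inv ≫ S.tmap (S.ℓ X).inv (𝟙 Y) =
      S.tmap (S.ω X) (𝟙 Y) := by
  rw [← cancel_mono (S.γ S.I X Y).hom]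
  simpa only [Category.assoc] using (S.ω_right X Y).trans (S.ω_left X Y).symm

lemma isIso_ω_t (X Y : V) [IsIso (S.ω X)] : IsIso (S.ω (S.t X Y)) := by
  rw [← S.ω_left X Y]
  infer_instance

lemma ω_t_I_eq_tmap_id_ω (X : V) [Epi (S.ω X)] :
    S.ω (S.t S.I X) = S.tmap (𝟙 S.I) (S.ω X) := by
  rw [← cancel_epi (S.ω X)]
  exact S.ω_nat (S.ω X)

lemma tmap_id_inv_ω_naturality {X Y : V} [IsIso (S.ω X)] [IsIso (S.ω Y)] (f : X ⟶ Y) :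
    S.tmap (𝟙 S.I) f ≫ inv (S.ω Y) = inv (S.ω X) ≫ f := by
  rw [IsIso.comp_inv_eq, Category.assoc, S.ω_nat f, IsIso.inv_hom_id_assoc]

lemma ℓ_inv_naturality {X Y : V} (f : X ⟶ Y) :
    (S.ℓ X).inv ≫ S.tmap (𝟙 S.I) f = S.tmap f (𝟙 S.I) ≫ (S.ℓ Y).inv := by
  rw [Iso.inv_comp_eq, ← Category.assoc, ← S.ℓ_nat f, Category.assoc, Iso.hom_inv_id,
    Category.comp_id]

lemma tmap_id_ℓ_inv_inv_ω_naturality {X Y : V} [IsIso (S.ω X)] [IsIso (S.ω Y)]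
    (f : X ⟶ Y) :
    S.tmap f (𝟙 S.I) ≫ ((S.ℓ Y).inv ≫ inv (S.ω Y)) = ((S.ℓ X).inv ≫ inv (S.ω X)) ≫ f := by
  rw [← Category.assoc, ← S.ℓ_inv_naturality, Category.assoc,
    S.tmap_id_inv_ω_naturality, Category.assoc]

lemma triangle (X Y : V) [IsIso (S.ω X)] [IsIso (S.ω Y)] :
    (S.γ X S.I Y).hom ≫ S.tmap (𝟙 X) (inv (S.ω Y)) =
      S.tmap ((S.ℓ X).inv ≫ inv (S.ω X)) (𝟙 Y) := by
  rw [← Iso.eq_inv_comp]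
  calc S.tmap (𝟙 X) (inv (S.ω Y))
      = S.tmap (𝟙 X) (inv (S.ω Y)) ≫ (S.tmap (𝟙 X) (S.ω Y) ≫ (S.γ X S.I Y).inv ≫
          S.tmap (S.ℓ X).inv (𝟙 Y)) ≫ S.tmap (inv (S.ω X)) (𝟙 Y) := by
        rw [S.tmap_id_ω_comp_γ_inv_comp_tmap_ℓ_inv, S.tmap_comp_tmap, IsIso.hom_inv_id,
          Category.comp_id, S.tmap_id, Category.comp_id]
    _ = (S.γ X S.I Y).inv ≫ S.tmap ((S.ℓ X).inv ≫ inv (S.ω X)) (𝟙 Y) := by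
        rw [← Category.assoc, ← Category.assoc, S.tmap_comp_tmap, IsIso.inv_hom_id,
          Category.comp_id, S.tmap_id, Category.id_comp, Category.assoc, S.tmap_comp_tmap,
          Category.comp_id]

section FirmUnit

variable [IsIso (S.ω S.I)]

lemma tmap_ℓ_I_inv_id : S.tmap (S.ℓ S.I).inv (𝟙 S.I) = 𝟙 _ := by
  have h := S.tmap_id_ω_comp_γ_inv_comp_tmap_ℓ_inv S.I S.I
  rw [← S.ω_t_I_eq_tmap_id_ω, ← S.ω_left, Category.assoc, Iso.hom_inv_id_assoc] at h
  rwa [← cancel_epi (S.tmap (S.ω S.I) (𝟙 S.I)), Category.comp_id]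

lemma tmap_id_ℓ_I_hom : S.tmap (𝟙 S.I) (S.ℓ S.I).hom = 𝟙 _ := by
  rw [← cancel_mono (S.ℓ (S.t S.I S.I)).hom, Category.id_comp, S.ℓ_nat, S.ℓ_I,
    S.tmap_ℓ_I_inv_id, Category.comp_id]

lemma ℓ_I_hom_eq_id : (S.ℓ S.I).hom = 𝟙 _ := by
  have := S.isIso_ω_t S.I S.I
  rw [← cancel_mono (S.ω (S.t S.I S.I)), S.ω_nat, S.tmap_id_ℓ_I_hom, Category.comp_id,
    Category.id_comp]

end FirmUnit

end SSM

/-- If `I` is firm then the firm objects are closed under the tensor product,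
and the full subcategory of firm objects is monoidal with unit `I`, associator
`γ`, left unitor `λ_X = ω_X⁻¹` and right unitor `ρ_X = ω_X⁻¹ ∘ ℘_X`: the
unitors are natural and satisfy the triangle identity. -/
theorem firm_monoidal {V : Type u} [Category.{v} V] (S : SSM V) [IsIso (S.ω S.I)] :
    -- (i) firm objects are closed under the tensor product
    (∀ X Y : V, IsIso (S.ω X) → IsIso (S.ω Y) → IsIso (S.ω (S.t X Y))) ∧
    -- (ii) left unitor naturality
    (∀ (X Y : V) [IsIso (S.ω X)] [IsIso (S.ω Y)] (f : X ⟶ Y),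
      S.tmap (𝟙 S.I) f ≫ inv (S.ω Y) = inv (S.ω X) ≫ f) ∧
    -- right unitor naturality
    (∀ (X Y : V) [IsIso (S.ω X)] [IsIso (S.ω Y)] (f : X ⟶ Y),
      S.tmap f (𝟙 S.I) ≫ ((S.ℓ Y).inv ≫ inv (S.ω Y)) = ((S.ℓ X).inv ≫ inv (S.ω X)) ≫ f) ∧
    -- the triangle identity
    (∀ (X Y : V) [IsIso (S.ω X)] [IsIso (S.ω Y)],
      (S.γ X S.I Y).hom ≫ S.tmap (𝟙 X) (inv (S.ω Y))
        = S.tmap ((S.ℓ X).inv ≫ inv (S.ω X)) (𝟙 Y)) ∧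
    -- the unit coherence `λ_I = ρ_I`
    (inv (S.ω S.I) = (S.ℓ S.I).inv ≫ inv (S.ω S.I)) := by
  refine ⟨fun X Y _ _ => S.isIso_ω_t X Y, fun _ _ _ _ f => S.tmap_id_inv_ω_naturality f,
    fun _ _ _ _ f => S.tmap_id_ℓ_inv_inv_ω_naturality f, fun X Y _ _ => S.triangle X Y, ?_⟩
  rw [← S.ℓ_I, S.ℓ_I_hom_eq_id, Category.id_comp]
end

section
/- Let (A, μ, η) be a semimonoid in a semiunital semimonoidal category (V, •, I; ω) and let J = I•−. Define natural transformations μ̂ with components μ̂_X = (X•μ)∘γ_{X,A,A} : (X•A)•A → X•A and ν̂ with components ν̂_X = (X•η)∘ℓ_X : I•X → X•A. Then (−•A, μ̂, ω, ν̂; J) is a J-monad on V. -/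
/-!
The isomorphism `(ℓ_X • A) ≫ γ_{X,I,A} : (I•X)•A ≅ X•(I•A)` carries both semiunit laws of
`− • A` to `X •` (the corresponding semiunit law of `A`): the axioms `ℓ_assoc`, `ω_left` and
`ω_right` say how `ℓ_{X•A}`, `ω_{X•A}` and `ω_X • A` pass through it. Associativity of `μ̂` is
associativity of `μ` whiskered by `X`, transported along the pentagon.
-/

open CategoryTheory

universe v u

variable {V : Type u} [Category.{v} V]

/-- `μ̂_X = (X • μ) ∘ γ_{X,A,A}`. -/
def mhat (S : SSM V) {A : V} (μ : S.t A A ⟶ A) (X : V) : S.t (S.t X A) A ⟶ S.t X A :=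
  (S.γ X A A).hom ≫ S.tmap (𝟙 X) μ

/-- `ν̂_X = (X • η) ∘ ℓ_X`. -/
def nhat (S : SSM V) {A : V} (η : S.I ⟶ A) (X : V) : S.t S.I X ⟶ S.t X A :=
  (S.ℓ X).hom ≫ S.tmap (𝟙 X) η

namespace SSM

variable (S : SSM V)

attribute [local simp] tmap_id

@[simp]
lemma tmap_id_comp {X Y Y' Y'' : V} (g : Y ⟶ Y') (g' : Y' ⟶ Y'') :
    S.tmap (𝟙 X) (g ≫ g') = S.tmap (𝟙 X) g ≫ S.tmap (𝟙 X) g' := by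
  rw [← S.tmap_comp, Category.id_comp]

@[simp]
lemma tmap_comp_id {X X' X'' Y : V} (f : X ⟶ X') (f' : X' ⟶ X'') :
    S.tmap (f ≫ f') (𝟙 Y) = S.tmap f (𝟙 Y) ≫ S.tmap f' (𝟙 Y) := by
  rw [← S.tmap_comp, Category.id_comp]

lemma tmap_exchange {X X' Y Y' : V} (f : X ⟶ X') (g : Y ⟶ Y') :
    S.tmap f (𝟙 Y) ≫ S.tmap (𝟙 X') g = S.tmap (𝟙 X) g ≫ S.tmap f (𝟙 Y') := by
  rw [← S.tmap_comp, ← S.tmap_comp]; simp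

@[simps]
def tmapIso {X X' Y Y' : V} (e : X ≅ X') (e' : Y ≅ Y') : S.t X Y ≅ S.t X' Y' where
  hom := S.tmap e.hom e'.hom
  inv := S.tmap e.inv e'.inv
  hom_inv_id := by rw [← S.tmap_comp]; simp
  inv_hom_id := by rw [← S.tmap_comp]; simp

@[simps!]
def ℓAssoc (X Y : V) : S.t (S.t S.I X) Y ≅ S.t X (S.t S.I Y) :=
  S.tmapIso (S.ℓ X) (Iso.refl Y) ≪≫ S.γ X S.I Y

lemma ℓ_tensor_comp_γ (X Y : V) :
    (S.ℓ (S.t X Y)).hom ≫ (S.γ X Y S.I).hom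
      = (S.γ S.I X Y).inv ≫ (S.ℓAssoc X Y).hom ≫ S.tmap (𝟙 X) (S.ℓ Y).hom := by
  rw [Iso.eq_inv_comp, S.ℓ_assoc, ℓAssoc_hom, Category.assoc]

lemma ω_tensor (X Y : V) :
    S.ω (S.t X Y) = S.tmap (𝟙 X) (S.ω Y) ≫ (S.ℓAssoc X Y).inv ≫ (S.γ S.I X Y).hom := by
  rw [← S.ω_right, ℓAssoc_inv, Category.assoc]

lemma tmap_ω_id (X Y : V) :
    S.tmap (S.ω X) (𝟙 Y) = S.tmap (𝟙 X) (S.ω Y) ≫ (S.ℓAssoc X Y).inv := by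
  rw [← cancel_mono (S.γ S.I X Y).hom, S.ω_left, ω_tensor, Category.assoc]

lemma ℓAssoc_conj_tmap_id {X Y : V} {u : S.t S.I Y ⟶ S.t S.I Y} (hu : u = 𝟙 _) :
    (S.ℓAssoc X Y).hom ≫ S.tmap (𝟙 X) u ≫ (S.ℓAssoc X Y).inv = 𝟙 _ := by
  rw [hu, S.tmap_id, Category.id_comp, Iso.hom_inv_id]

end SSM

section JMonad

variable (S : SSM V) {A : V}

lemma mhat_naturality (μ : S.t A A ⟶ A) {X X' : V} (f : X ⟶ X') :
    S.tmap (S.tmap f (𝟙 A)) (𝟙 A) ≫ mhat S μ X' = mhat S μ X ≫ S.tmap f (𝟙 A) := by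
  rw [mhat, mhat, reassoc_of% S.γ_nat f (𝟙 A) (𝟙 A), SSM.tmap_id, Category.assoc,
    S.tmap_exchange]

lemma nhat_naturality (η : S.I ⟶ A) {X X' : V} (f : X ⟶ X') :
    S.tmap (𝟙 S.I) f ≫ nhat S η X' = nhat S η X ≫ S.tmap f (𝟙 A) := by
  rw [nhat, nhat, reassoc_of% S.ℓ_nat f, Category.assoc, S.tmap_exchange]

lemma mhat_assoc {μ : S.t A A ⟶ A}
    (hassoc : S.tmap μ (𝟙 A) ≫ μ = (S.γ A A A).hom ≫ S.tmap (𝟙 A) μ ≫ μ) (X : V) :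
    S.tmap (mhat S μ X) (𝟙 A) ≫ mhat S μ X = mhat S μ (S.t X A) ≫ mhat S μ X := by
  simp only [mhat]
  calc S.tmap ((S.γ X A A).hom ≫ S.tmap (𝟙 X) μ) (𝟙 A) ≫ (S.γ X A A).hom ≫ S.tmap (𝟙 X) μ
      = S.tmap (S.γ X A A).hom (𝟙 A) ≫ (S.γ X (S.t A A) A).hom ≫
          S.tmap (𝟙 X) (S.tmap μ (𝟙 A) ≫ μ) := by
        rw [S.tmap_comp_id, Category.assoc, reassoc_of% S.γ_nat (𝟙 X) μ (𝟙 A),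
          S.tmap_id_comp]
    _ = (S.tmap (S.γ X A A).hom (𝟙 A) ≫ (S.γ X (S.t A A) A).hom ≫
          S.tmap (𝟙 X) (S.γ A A A).hom) ≫ S.tmap (𝟙 X) (S.tmap (𝟙 A) μ) ≫ S.tmap (𝟙 X) μ := by
        rw [hassoc, S.tmap_id_comp, S.tmap_id_comp]
        simp only [Category.assoc]
    _ = (S.γ (S.t X A) A A).hom ≫ (S.γ X A (S.t A A)).hom ≫
          S.tmap (𝟙 X) (S.tmap (𝟙 A) μ) ≫ S.tmap (𝟙 X) μ := by
        rw [S.pentagon, Category.assoc]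
    _ = ((S.γ (S.t X A) A A).hom ≫ S.tmap (𝟙 (S.t X A)) μ) ≫ (S.γ X A A).hom ≫
          S.tmap (𝟙 X) μ := by
        rw [Category.assoc, ← reassoc_of% (S.γ_nat (𝟙 X) (𝟙 A) μ), S.tmap_id]

lemma nhat_mhat_ω_eq_id {μ : S.t A A ⟶ A} {η : S.I ⟶ A}
    (hunit_r : (S.ℓ A).hom ≫ S.tmap (𝟙 A) η ≫ μ ≫ S.ω A = 𝟙 (S.t S.I A)) (X : V) :
    nhat S η (S.t X A) ≫ mhat S μ X ≫ S.ω (S.t X A) = 𝟙 (S.t S.I (S.t X A)) := by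
  have hη : S.tmap (𝟙 (S.t X A)) η ≫ (S.γ X A A).hom
      = (S.γ X A S.I).hom ≫ S.tmap (𝟙 X) (S.tmap (𝟙 A) η) := by
    rw [← S.tmap_id X A, S.γ_nat]
  calc nhat S η (S.t X A) ≫ mhat S μ X ≫ S.ω (S.t X A)
      = (S.γ S.I X A).inv ≫ ((S.ℓAssoc X A).hom ≫
          S.tmap (𝟙 X) ((S.ℓ A).hom ≫ S.tmap (𝟙 A) η ≫ μ ≫ S.ω A) ≫
          (S.ℓAssoc X A).inv) ≫ (S.γ S.I X A).hom := by
        simp only [nhat, mhat, S.ω_tensor, Category.assoc, reassoc_of% hη,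
          reassoc_of% S.ℓ_tensor_comp_γ, SSM.tmap_id_comp]
    _ = 𝟙 _ := by rw [S.ℓAssoc_conj_tmap_id hunit_r, Category.id_comp, Iso.inv_hom_id]

lemma tmap_nhat_mhat_tmap_ω_eq_id {μ : S.t A A ⟶ A} {η : S.I ⟶ A}
    (hunit_l : S.tmap η (𝟙 A) ≫ μ ≫ S.ω A = 𝟙 (S.t S.I A)) (X : V) :
    S.tmap (nhat S η X) (𝟙 A) ≫ mhat S μ X ≫ S.tmap (S.ω X) (𝟙 A)
      = 𝟙 (S.t (S.t S.I X) A) := by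
  calc S.tmap (nhat S η X) (𝟙 A) ≫ mhat S μ X ≫ S.tmap (S.ω X) (𝟙 A)
      = (S.ℓAssoc X A).hom ≫ S.tmap (𝟙 X) (S.tmap η (𝟙 A) ≫ μ ≫ S.ω A) ≫
          (S.ℓAssoc X A).inv := by
        simp only [nhat, mhat, S.tmap_ω_id, S.ℓAssoc_hom, SSM.tmap_comp_id, SSM.tmap_id_comp,
          Category.assoc, reassoc_of% S.γ_nat (𝟙 X) η (𝟙 A)]
    _ = 𝟙 _ := S.ℓAssoc_conj_tmap_id hunit_l

end JMonad

/-- For a semimonoid `(A, μ, η)` in a semiunital semimonoidal category,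
`(− • A, μ̂, ω, ν̂; J)` is a `J`-monad (with `J = I • −`): `μ̂` and `ν̂` are
natural and satisfy the associativity and semiunit laws. -/
theorem semimonoid_gives_JMonad (S : SSM V) (A : V)
    (μ : S.t A A ⟶ A) (η : S.I ⟶ A)
    (hassoc : S.tmap μ (𝟙 A) ≫ μ = (S.γ A A A).hom ≫ S.tmap (𝟙 A) μ ≫ μ)
    (hunit_l : S.tmap η (𝟙 A) ≫ μ ≫ S.ω A = 𝟙 (S.t S.I A))
    (hunit_r : (S.ℓ A).hom ≫ S.tmap (𝟙 A) η ≫ μ ≫ S.ω A = 𝟙 (S.t S.I A)) :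
    -- naturality of `μ̂`
    (∀ (X X' : V) (f : X ⟶ X'),
      S.tmap (S.tmap f (𝟙 A)) (𝟙 A) ≫ mhat S μ X' = mhat S μ X ≫ S.tmap f (𝟙 A)) ∧
    -- naturality of `ν̂`
    (∀ (X X' : V) (f : X ⟶ X'),
      S.tmap (𝟙 S.I) f ≫ nhat S η X' = nhat S η X ≫ S.tmap f (𝟙 A)) ∧
    -- associativity: `μ̂ ∘ Mμ̂ = μ̂ ∘ μ̂M`
    (∀ X : V, S.tmap (mhat S μ X) (𝟙 A) ≫ mhat S μ X = mhat S μ (S.t X A) ≫ mhat S μ X) ∧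
    -- semiunit law `(ωM) ∘ μ̂ ∘ (ν̂M) = id_{JM}`
    (∀ X : V, nhat S η (S.t X A) ≫ mhat S μ X ≫ S.ω (S.t X A) = 𝟙 (S.t S.I (S.t X A))) ∧
    -- semiunit law `(Mω) ∘ μ̂ ∘ (Mν̂) = id_{MJ}`
    (∀ X : V, S.tmap (nhat S η X) (𝟙 A) ≫ mhat S μ X ≫ S.tmap (S.ω X) (𝟙 A)
      = 𝟙 (S.t (S.t S.I X) A)) :=
  ⟨fun _ _ f => mhat_naturality S μ f, fun _ _ f => nhat_naturality S η f,
    mhat_assoc S hassoc, nhat_mhat_ω_eq_id S hunit_r, tmap_nhat_mhat_tmap_ω_eq_id S hunit_l⟩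
end

section
/- Let (C, Δ, ε) be a semicomonoid and (A, μ, η) a unital semimonoid (ω_A is an isomorphism) in a semiunital semimonoidal category (V, •, I; ω). Then the hom-set Hom_V(C, A) is a monoid under the convolution product f * g := μ∘(f•g)∘Δ, with two-sided unit element e := η∘ε; i.e. * is associative and e * f = f = f * e for all f ∈ Hom_V(C, A). -/
/-!
Associativity: expanding both sides by functoriality of `•`, coassociativity of `Δ` and
associativity of `μ` are connected by naturality of the associator `γ`.
Units: the counit laws turn `Δ` followed by `ε` into `ω_C` (resp. `ω_C ≫ ℓ_C`); naturality of `ω`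
and `ℓ` moves `f` to the front, and what remains on `A` is the identity because the unit laws
exhibit `μ ∘ (η • A)` (resp. `μ ∘ (A • η) ∘ ℓ_A`) as a left inverse, hence the inverse, of the
isomorphism `ω_A`.
-/

open CategoryTheory

universe v u

namespace SSM

variable {V : Type u} [Category.{v} V] (S : SSM V)

lemma tmap_comp_comp_left {W X Y Z P Q : V} (a : W ⟶ X) (b : X ⟶ Y) (c : Y ⟶ Z) (h : P ⟶ Q) :
    S.tmap (a ≫ b ≫ c) h = S.tmap a (𝟙 P) ≫ S.tmap b h ≫ S.tmap c (𝟙 Q) := by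
  rw [← S.tmap_comp, ← S.tmap_comp, Category.id_comp, Category.comp_id]

lemma tmap_comp_comp_right {P Q W X Y Z : V} (f : P ⟶ Q) (a : W ⟶ X) (b : X ⟶ Y) (c : Y ⟶ Z) :
    S.tmap f (a ≫ b ≫ c) = S.tmap (𝟙 P) a ≫ S.tmap f b ≫ S.tmap (𝟙 Q) c := by
  rw [← S.tmap_comp, ← S.tmap_comp, Category.id_comp, Category.comp_id]

section Convolution

variable {C A : V} (Δ : C ⟶ S.t C C) (μ : S.t A A ⟶ A)

def conv (f g : C ⟶ A) : C ⟶ A :=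
  Δ ≫ S.tmap f g ≫ μ

variable {S Δ μ}

theorem conv_assoc (hcoassoc : Δ ≫ S.tmap Δ (𝟙 C) ≫ (S.γ C C C).hom = Δ ≫ S.tmap (𝟙 C) Δ)
    (hassoc : S.tmap μ (𝟙 A) ≫ μ = (S.γ A A A).hom ≫ S.tmap (𝟙 A) μ ≫ μ) (f g h : C ⟶ A) :
    S.conv Δ μ (S.conv Δ μ f g) h = S.conv Δ μ f (S.conv Δ μ g h) := by
  calc Δ ≫ S.tmap (Δ ≫ S.tmap f g ≫ μ) h ≫ μ
      = (Δ ≫ S.tmap Δ (𝟙 C)) ≫ (S.tmap (S.tmap f g) h ≫ (S.γ A A A).hom) ≫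
          S.tmap (𝟙 A) μ ≫ μ := by
        simp only [tmap_comp_comp_left, hassoc, Category.assoc]
    _ = (Δ ≫ S.tmap Δ (𝟙 C) ≫ (S.γ C C C).hom) ≫ S.tmap f (S.tmap g h) ≫
          S.tmap (𝟙 A) μ ≫ μ := by
        simp only [S.γ_nat, Category.assoc]
    _ = Δ ≫ S.tmap f (Δ ≫ S.tmap g h ≫ μ) ≫ μ := by
        simp only [hcoassoc, tmap_comp_comp_right, Category.assoc]

variable {ε : C ⟶ S.I} {η : S.I ⟶ A}

theorem conv_unit_left (hcounit_l : Δ ≫ S.tmap ε (𝟙 C) = S.ω C)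
    (hη : S.ω A ≫ S.tmap η (𝟙 A) ≫ μ = 𝟙 A) (f : C ⟶ A) :
    S.conv Δ μ (ε ≫ η) f = f := by
  have hsplit : S.tmap (ε ≫ η) f = S.tmap ε (𝟙 C) ≫ S.tmap (𝟙 S.I) f ≫ S.tmap η (𝟙 A) := by
    simpa only [Category.id_comp] using S.tmap_comp_comp_left ε (𝟙 S.I) η f
  calc Δ ≫ S.tmap (ε ≫ η) f ≫ μ
      = (Δ ≫ S.tmap ε (𝟙 C)) ≫ S.tmap (𝟙 S.I) f ≫ S.tmap η (𝟙 A) ≫ μ := by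
        simp only [hsplit, Category.assoc]
    _ = f ≫ S.ω A ≫ S.tmap η (𝟙 A) ≫ μ := by
        rw [hcounit_l, ← Category.assoc (S.ω C), ← S.ω_nat, Category.assoc]
    _ = f := by
        rw [hη, Category.comp_id]

theorem conv_unit_right (hcounit_r : Δ ≫ S.tmap (𝟙 C) ε = S.ω C ≫ (S.ℓ C).hom)
    (hη : S.ω A ≫ (S.ℓ A).hom ≫ S.tmap (𝟙 A) η ≫ μ = 𝟙 A) (f : C ⟶ A) :
    S.conv Δ μ f (ε ≫ η) = f := by
  have hsplit : S.tmap f (ε ≫ η) = S.tmap (𝟙 C) ε ≫ S.tmap f (𝟙 S.I) ≫ S.tmap (𝟙 A) η := by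
    simpa only [Category.id_comp] using S.tmap_comp_comp_right f ε (𝟙 S.I) η
  calc Δ ≫ S.tmap f (ε ≫ η) ≫ μ
      = (Δ ≫ S.tmap (𝟙 C) ε) ≫ S.tmap f (𝟙 S.I) ≫ S.tmap (𝟙 A) η ≫ μ := by
        simp only [hsplit, Category.assoc]
    _ = S.ω C ≫ S.tmap (𝟙 S.I) f ≫ (S.ℓ A).hom ≫ S.tmap (𝟙 A) η ≫ μ := by
        rw [hcounit_r, Category.assoc, ← Category.assoc (S.ℓ C).hom, ← S.ℓ_nat, Category.assoc]
    _ = f ≫ S.ω A ≫ (S.ℓ A).hom ≫ S.tmap (𝟙 A) η ≫ μ := by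
        rw [← Category.assoc (S.ω C), ← S.ω_nat, Category.assoc]
    _ = f := by
        rw [hη, Category.comp_id]

end Convolution

end SSM

/-- For a semicomonoid `(C, Δ, ε)` and a unital semimonoid `(A, μ, η)` in a
semiunital semimonoidal category, `Hom(C, A)` is a monoid under the
convolution product `f * g = μ ∘ (f • g) ∘ Δ` with unit `e = η ∘ ε`. -/
theorem convolution_monoid {V : Type u} [Category.{v} V] (S : SSM V)
    (C A : V)
    (Δ : C ⟶ S.t C C) (ε : C ⟶ S.I)
    (hcoassoc : Δ ≫ S.tmap Δ (𝟙 C) ≫ (S.γ C C C).hom = Δ ≫ S.tmap (𝟙 C) Δ)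
    (hcounit_l : Δ ≫ S.tmap ε (𝟙 C) = S.ω C)
    (hcounit_r : Δ ≫ S.tmap (𝟙 C) ε = S.ω C ≫ (S.ℓ C).hom)
    (μ : S.t A A ⟶ A) (η : S.I ⟶ A)
    (hassoc : S.tmap μ (𝟙 A) ≫ μ = (S.γ A A A).hom ≫ S.tmap (𝟙 A) μ ≫ μ)
    (hunit_l : S.tmap η (𝟙 A) ≫ μ ≫ S.ω A = 𝟙 (S.t S.I A))
    (hunit_r : (S.ℓ A).hom ≫ S.tmap (𝟙 A) η ≫ μ ≫ S.ω A = 𝟙 (S.t S.I A))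
    [IsIso (S.ω A)] :
    -- associativity of the convolution product
    (∀ f g h : C ⟶ A,
      Δ ≫ S.tmap (Δ ≫ S.tmap f g ≫ μ) h ≫ μ
        = Δ ≫ S.tmap f (Δ ≫ S.tmap g h ≫ μ) ≫ μ) ∧
    -- `e = η ∘ ε` is a left unit
    (∀ f : C ⟶ A, Δ ≫ S.tmap (ε ≫ η) f ≫ μ = f) ∧
    -- `e = η ∘ ε` is a right unit
    (∀ f : C ⟶ A, Δ ≫ S.tmap f (ε ≫ η) ≫ μ = f) := by
  have hη_l : S.ω A ≫ S.tmap η (𝟙 A) ≫ μ = 𝟙 A :=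
    (hom_comp_eq_id _).2 ((comp_hom_eq_id _).1 (by simpa only [Category.assoc] using hunit_l))
  have hη_r : S.ω A ≫ (S.ℓ A).hom ≫ S.tmap (𝟙 A) η ≫ μ = 𝟙 A :=
    (hom_comp_eq_id _).2 ((comp_hom_eq_id _).1 (by simpa only [Category.assoc] using hunit_r))
  exact ⟨SSM.conv_assoc hcoassoc hassoc, SSM.conv_unit_left hcounit_l hη_l,
    SSM.conv_unit_right hcounit_r hη_r⟩
end
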